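/- Gaussian temporal Hölder estimate: for each c > 1 and each multi-index ζ with |ζ| ≤ 2, there exists a finite constant C such that for all 0 < u ≤ u' ≤ T and x ∈ R^d: |∇_x^ζ g_1(u', x) − ∇_x^ζ g_1(u, x)| ≤ C ((u' − u) ∧ u) u^{-1-|ζ|/2} (g_c(u, x) + g_c(u', x)). -/

import Mathlib

open scoped Real

/-- `gauss d c u x` is the density at `x` of the centered Gaussian vector in `ℝ^d`
with covariance matrix `c u I_d`. -/
noncomputable def gauss (d : ℕ) (c u : ℝ) (x : EuclideanSpace ℝ (Fin d)) : ℝ :=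
  (2 * Real.pi * c * u) ^ (-(d : ℝ) / 2) * Real.exp (-‖x‖ ^ 2 / (2 * c * u))

/-- The spatial derivative `∇^ζ g_1(u,·)(x)` of order `k = |ζ|`, encoded by the map
`idx : Fin k → Fin d` listing the coordinate directions of differentiation. -/
noncomputable def gaussDeriv (d : ℕ) (k : ℕ) (idx : Fin k → Fin d) (u : ℝ)
    (x : EuclideanSpace ℝ (Fin d)) : ℝ :=
  iteratedFDeriv ℝ k (gauss d 1 u) x fun m => EuclideanSpace.single (idx m) 1

/-!
For `|ζ| ≤ 2`, `∇^ζ g_1(u, x)` is a sum of terms `a(x) g_1(u, x) / u^j` with `|a(x)| ≤ |x|^m`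
and `|ζ| + m = 2j`. With `r = |x|² / u`, such a term is at most `u^{-|ζ|/2} r^{m/2} g_1(u, x)`,
and by the heat equation `u` times its time derivative is at most `u^{-|ζ|/2}` times a polynomial
in `r^{1/2}` times `g_1(u, x)`; since `c > 1`, `r^p g_1(u, x) ≤ K g_c(u, x)`. If `u' ≤ 2u` the
mean value theorem, together with `g_c(s, x) ≤ 2^{d/2} g_c(u', x)` for `s ∈ [u, u']`, gives the
factor `u' - u`; if `u' > 2u` the two values are bounded separately, giving the factor `u`.
-/

open Real

lemma exists_rpow_mul_exp_neg_le {a b p : ℝ} (hab : a < b) (hp : 0 ≤ p) :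
    ∃ K, 0 ≤ K ∧ ∀ r, 0 ≤ r → r ^ p * exp (-(b * r)) ≤ K * exp (-(a * r)) := by
  set n := ⌈p⌉₊
  have hε : 0 < b - a := sub_pos.2 hab
  refine ⟨1 + n.factorial / (b - a) ^ n, by positivity, fun r hr => ?_⟩
  have hrp : r ^ p ≤ 1 + r ^ n := by
    rcases le_total r 1 with h | h
    · linarith [Real.rpow_le_one hr h hp, pow_nonneg hr n]
    · have := Real.rpow_le_rpow_of_exponent_le h (Nat.le_ceil p)
      rw [Real.rpow_natCast] at this
      linarith
  have hpow : r ^ n * exp (-((b - a) * r)) ≤ n.factorial / (b - a) ^ n := by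
    have := pow_div_factorial_le_exp _ (mul_nonneg hε.le hr) n
    rw [mul_pow, div_le_iff₀ (by positivity)] at this
    rw [exp_neg, ← div_eq_mul_inv, div_le_div_iff₀ (exp_pos _) (by positivity)]
    linarith
  have hexp : exp (-((b - a) * r)) ≤ 1 := exp_le_one_iff.2 (by nlinarith)
  calc r ^ p * exp (-(b * r)) = r ^ p * exp (-((b - a) * r)) * exp (-(a * r)) := by
        rw [mul_assoc, ← exp_add]; ring_nf
    _ ≤ (1 + r ^ n) * exp (-((b - a) * r)) * exp (-(a * r)) := by gcongr
    _ ≤ (1 + n.factorial / (b - a) ^ n) * exp (-(a * r)) := by gcongr; linarith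

lemma abs_mul_div_pow_le_rpow {a N s G : ℝ} {k m j : ℕ} (hN : 0 ≤ N) (hs : 0 < s) (hG : 0 ≤ G)
    (ha : |a| ≤ N ^ m) (hkmj : k + m = 2 * j) :
    |a| * (G / s ^ j) ≤ s ^ (-((k : ℝ) / 2)) * ((N ^ 2 / s) ^ ((m : ℝ) / 2) * G) := by
  have hj : (j : ℝ) = k / 2 + m / 2 := by
    have : (k : ℝ) + m = 2 * j := by exact_mod_cast hkmj
    linarith
  have hNm : (N ^ 2) ^ ((m : ℝ) / 2) = N ^ m := by
    rw [← Real.rpow_natCast N 2, ← Real.rpow_mul hN, ← Real.rpow_natCast N m]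
    congr 1
    push_cast
    ring
  calc |a| * (G / s ^ j) ≤ N ^ m * (G / s ^ j) := by gcongr
    _ = s ^ (-((k : ℝ) / 2)) * ((N ^ 2 / s) ^ ((m : ℝ) / 2) * G) := by
      rw [Real.div_rpow (by positivity) hs.le, hNm, ← Real.rpow_natCast s j, hj,
        Real.rpow_add hs, Real.rpow_neg hs.le]
      field_simp

lemma abs_sub_le_of_hasDerivAt_of_rpow_bounds {h h' φ : ℝ → ℝ} {α A B L : ℝ} (hα : 0 ≤ α)
    (hA : 0 ≤ A) (hB : 0 ≤ B) (hL : 0 ≤ L) (hφ : ∀ s, 0 < s → 0 ≤ φ s)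
    (hφ_doubling : ∀ s t, 0 < s → s ≤ t → t ≤ 2 * s → φ s ≤ L * φ t)
    (hder : ∀ s, 0 < s → HasDerivAt h (h' s) s)
    (hh : ∀ s, 0 < s → |h s| ≤ A * s ^ (-α) * φ s)
    (hh' : ∀ s, 0 < s → |h' s| ≤ B * s ^ (-1 - α) * φ s)
    {u u' : ℝ} (hu : 0 < u) (huu' : u ≤ u') :
    |h u' - h u| ≤ (A + B * L) * min (u' - u) u * u ^ (-1 - α) * (φ u + φ u') := by
  have hu' : 0 < u' := hu.trans_le huu'
  have hφu := hφ u hu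
  have hφu' := hφ u' hu'
  have hw : 0 < u ^ (-1 - α) := Real.rpow_pos_of_pos hu _
  rcases le_or_gt u' (2 * u) with hclose | hfar
  · have hmvt := norm_image_sub_le_of_norm_deriv_le_segment' (f := h) (a := u) (b := u')
      (C := B * u ^ (-1 - α) * (L * φ u'))
      (fun s hs => (hder s (hu.trans_le hs.1)).hasDerivWithinAt) (fun s hs => by
        have hs₀ : 0 < s := hu.trans_le hs.1
        have hpow : s ^ (-1 - α) ≤ u ^ (-1 - α) :=
          Real.rpow_le_rpow_of_nonpos hu hs.1 (by linarith)
        calc ‖h' s‖ ≤ B * s ^ (-1 - α) * φ s := hh' s hs₀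
          _ ≤ B * u ^ (-1 - α) * φ s := by gcongr; exact hφ s hs₀
          _ ≤ B * u ^ (-1 - α) * (L * φ u') := by
            gcongr
            exact hφ_doubling s u' hs₀ hs.2.le (by linarith [hs.1]))
      u' (Set.right_mem_Icc.2 huu')
    rw [min_eq_left (by linarith)]
    calc |h u' - h u| ≤ B * u ^ (-1 - α) * (L * φ u') * (u' - u) := hmvt
      _ ≤ _ := by nlinarith [mul_nonneg (mul_nonneg hA hw.le) (sub_nonneg.2 huu'),
          mul_nonneg (mul_nonneg (mul_nonneg hB hL) hw.le) (sub_nonneg.2 huu')]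
  · have hdecay : ∀ s, u ≤ s → |h s| ≤ A * u * u ^ (-1 - α) * φ s := fun s hs => by
      have hs₀ : 0 < s := hu.trans_le hs
      calc |h s| ≤ A * s ^ (-α) * φ s := hh s hs₀
        _ ≤ A * u ^ (-α) * φ s := by
          have hpow : s ^ (-α) ≤ u ^ (-α) := Real.rpow_le_rpow_of_nonpos hu hs (by linarith)
          gcongr
          exact hφ s hs₀
        _ = A * u * u ^ (-1 - α) * φ s := by
          rw [show -α = 1 + (-1 - α) by ring, Real.rpow_add hu, Real.rpow_one]
          ring
    rw [min_eq_right (by linarith)]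
    calc |h u' - h u| ≤ |h u'| + |h u| := abs_sub _ _
      _ ≤ A * u * u ^ (-1 - α) * φ u' + A * u * u ^ (-1 - α) * φ u :=
          add_le_add (hdecay u' huu') (hdecay u le_rfl)
      _ ≤ _ := by nlinarith [mul_nonneg (mul_nonneg (mul_nonneg hB hL) hu.le) hw.le]

lemma gauss_pos (d : ℕ) {c u : ℝ} (hc : 0 < c) (hu : 0 < u) (x : EuclideanSpace ℝ (Fin d)) :
    0 < gauss d c u x := by
  unfold gauss
  positivity

lemma exists_rpow_mul_gauss_le (d : ℕ) {c₁ c₂ p : ℝ} (hc₁ : 0 < c₁) (hc : c₁ < c₂)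
    (hp : 0 ≤ p) :
    ∃ K, 0 ≤ K ∧ ∀ s, 0 < s → ∀ x : EuclideanSpace ℝ (Fin d),
      (‖x‖ ^ 2 / s) ^ p * gauss d c₁ s x ≤ K * gauss d c₂ s x := by
  have hc₂ : 0 < c₂ := hc₁.trans hc
  obtain ⟨K, hK, hbound⟩ :=
    exists_rpow_mul_exp_neg_le (a := 1 / (2 * c₂)) (b := 1 / (2 * c₁)) (by gcongr) hp
  refine ⟨(c₁ / c₂) ^ (-(d : ℝ) / 2) * K, by positivity, fun s hs x => ?_⟩
  have hpre : (2 * π * c₁ * s) ^ (-(d : ℝ) / 2) =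
      (c₁ / c₂) ^ (-(d : ℝ) / 2) * (2 * π * c₂ * s) ^ (-(d : ℝ) / 2) := by
    rw [← Real.mul_rpow (by positivity) (by positivity)]
    congr 1
    field_simp
  have hexp : ∀ c, -‖x‖ ^ 2 / (2 * c * s) = -(1 / (2 * c) * (‖x‖ ^ 2 / s)) := fun c => by
    ring
  simp only [gauss, hpre, hexp]
  calc (‖x‖ ^ 2 / s) ^ p * ((c₁ / c₂) ^ (-(d : ℝ) / 2) * (2 * π * c₂ * s) ^ (-(d : ℝ) / 2) *
        exp (-(1 / (2 * c₁) * (‖x‖ ^ 2 / s))))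
      = (c₁ / c₂) ^ (-(d : ℝ) / 2) * (2 * π * c₂ * s) ^ (-(d : ℝ) / 2) *
        ((‖x‖ ^ 2 / s) ^ p * exp (-(1 / (2 * c₁) * (‖x‖ ^ 2 / s)))) := by ring
    _ ≤ (c₁ / c₂) ^ (-(d : ℝ) / 2) * (2 * π * c₂ * s) ^ (-(d : ℝ) / 2) *
        (K * exp (-(1 / (2 * c₂) * (‖x‖ ^ 2 / s)))) := by
        gcongr _ * ?_
        exact hbound _ (by positivity)
    _ = _ := by ring

lemma gauss_le_two_rpow_mul_gauss (d : ℕ) {c s t : ℝ} (hc : 0 < c) (hs : 0 < s) (hst : s ≤ t)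
    (ht : t ≤ 2 * s) (x : EuclideanSpace ℝ (Fin d)) :
    gauss d c s x ≤ 2 ^ ((d : ℝ) / 2) * gauss d c t x := by
  have ht₀ : 0 < t := hs.trans_le hst
  have hpre : (2 * π * c * s) ^ (-(d : ℝ) / 2) ≤
      2 ^ ((d : ℝ) / 2) * (2 * π * c * t) ^ (-(d : ℝ) / 2) := by
    calc (2 * π * c * s) ^ (-(d : ℝ) / 2) ≤ (2⁻¹ * (2 * π * c * t)) ^ (-(d : ℝ) / 2) := by
          refine Real.rpow_le_rpow_of_nonpos (by positivity) ?_ ?_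
          · nlinarith [mul_pos pi_pos hc]
          · linarith [d.cast_nonneg (α := ℝ)]
      _ = 2 ^ ((d : ℝ) / 2) * (2 * π * c * t) ^ (-(d : ℝ) / 2) := by
          rw [Real.mul_rpow (by norm_num) (by positivity), Real.inv_rpow zero_le_two,
            ← Real.rpow_neg zero_le_two, neg_div, neg_neg]
  have hexp : exp (-‖x‖ ^ 2 / (2 * c * s)) ≤ exp (-‖x‖ ^ 2 / (2 * c * t)) := by
    rw [exp_le_exp, neg_div, neg_div, neg_le_neg_iff]
    gcongr
  calc gauss d c s x ≤ 2 ^ ((d : ℝ) / 2) * (2 * π * c * t) ^ (-(d : ℝ) / 2) *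
      exp (-‖x‖ ^ 2 / (2 * c * t)) := by unfold gauss; gcongr
    _ = _ := by rw [mul_assoc]; rfl

lemma hasDerivAt_gauss_time (d : ℕ) {c s : ℝ} (hc : 0 < c) (hs : 0 < s)
    (x : EuclideanSpace ℝ (Fin d)) :
    HasDerivAt (fun t => gauss d c t x)
      ((‖x‖ ^ 2 / (2 * c * s ^ 2) - d / (2 * s)) * gauss d c s x) s := by
  have hpre := ((hasDerivAt_id s).const_mul (2 * π * c)).rpow_const (p := -(d : ℝ) / 2)
    (Or.inl (by positivity))
  have hinv : HasDerivAt (fun t => -‖x‖ ^ 2 / (2 * c * t)) (‖x‖ ^ 2 / (2 * c * s ^ 2)) s := by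
    rw [show (fun t => -‖x‖ ^ 2 / (2 * c * t)) = fun t => -‖x‖ ^ 2 / (2 * c) * t⁻¹ by
      funext t; ring]
    exact ((hasDerivAt_inv hs.ne').const_mul _).congr_deriv (by ring)
  refine (hpre.mul hinv.exp).congr_deriv ?_
  rw [Real.rpow_sub (by positivity), Real.rpow_one]
  simp only [gauss, id]
  field_simp
  ring

lemma hasDerivAt_gauss_div_pow (d j : ℕ) {s : ℝ} (hs : 0 < s) (x : EuclideanSpace ℝ (Fin d)) :
    HasDerivAt (fun t => gauss d 1 t x / t ^ j)
      ((‖x‖ ^ 2 / s / 2 - d / 2 - j) / s * (gauss d 1 s x / s ^ j)) s := by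
  refine ((hasDerivAt_gauss_time d one_pos hs x).div (hasDerivAt_pow j s)
    (pow_ne_zero j hs.ne')).congr_deriv ?_
  cases j with
  | zero => simp only [pow_zero]; field_simp; ring
  | succ j => simp only [Nat.add_sub_cancel]; field_simp; ring

lemma abs_mul_deriv_gauss_div_pow_le {d k m j : ℕ} {a s : ℝ} (x : EuclideanSpace ℝ (Fin d))
    (hs : 0 < s) (ha : |a| ≤ ‖x‖ ^ m) (hkmj : k + m = 2 * j) :
    |a * ((‖x‖ ^ 2 / s / 2 - d / 2 - j) / s * (gauss d 1 s x / s ^ j))| ≤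
      s ^ (-1 - (k : ℝ) / 2) * (1 / 2 * ((‖x‖ ^ 2 / s) ^ ((m : ℝ) / 2 + 1) * gauss d 1 s x) +
        (d / 2 + j) * ((‖x‖ ^ 2 / s) ^ ((m : ℝ) / 2) * gauss d 1 s x)) := by
  have hG := (gauss_pos d one_pos hs x).le
  have hGj : 0 ≤ gauss d 1 s x / s ^ j := by positivity
  set r := ‖x‖ ^ 2 / s
  have hr : 0 ≤ r := by positivity
  have hq : |r / 2 - d / 2 - j| ≤ r / 2 + (d / 2 + j) := by
    rw [abs_le]; constructor <;> linarith [d.cast_nonneg (α := ℝ), j.cast_nonneg (α := ℝ)]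
  have hs1 : s ^ (-1 - (k : ℝ) / 2) = s ^ (-((k : ℝ) / 2)) / s := by
    rw [show -1 - (k : ℝ) / 2 = -((k : ℝ) / 2) - 1 by ring, Real.rpow_sub hs, Real.rpow_one]
  have hrr : r ^ ((m : ℝ) / 2 + 1) = r ^ ((m : ℝ) / 2) * r := by
    rw [Real.rpow_add' hr (by positivity), Real.rpow_one]
  calc |a * ((r / 2 - d / 2 - j) / s * (gauss d 1 s x / s ^ j))|
      = |r / 2 - d / 2 - j| / s * (|a| * (gauss d 1 s x / s ^ j)) := by
        rw [abs_mul, abs_mul, abs_div, abs_of_pos hs, abs_of_nonneg hGj]; ring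
    _ ≤ (r / 2 + (d / 2 + j)) / s *
        (s ^ (-((k : ℝ) / 2)) * (r ^ ((m : ℝ) / 2) * gauss d 1 s x)) := by
        gcongr ?_ / _ * ?_
        exact abs_mul_div_pow_le_rpow (norm_nonneg x) hs hG ha hkmj
    _ = _ := by rw [hs1, hrr]; ring

lemma exists_holder_gauss_div_pow (d : ℕ) {c : ℝ} (hc : 1 < c) {k m j : ℕ}
    (hkmj : k + m = 2 * j) :
    ∃ C, 0 ≤ C ∧ ∀ (a : ℝ) (x : EuclideanSpace ℝ (Fin d)) (u u' : ℝ), |a| ≤ ‖x‖ ^ m →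
      0 < u → u ≤ u' →
      |a * (gauss d 1 u' x / u' ^ j) - a * (gauss d 1 u x / u ^ j)| ≤
        C * min (u' - u) u * u ^ (-1 - (k : ℝ) / 2) * (gauss d c u x + gauss d c u' x) := by
  have hc₀ : 0 < c := by linarith
  obtain ⟨K₀, hK₀, hmom₀⟩ := exists_rpow_mul_gauss_le d one_pos hc (p := (m : ℝ) / 2)
    (by positivity)
  obtain ⟨K₁, hK₁, hmom₁⟩ := exists_rpow_mul_gauss_le d one_pos hc (p := (m : ℝ) / 2 + 1)
    (by positivity)
  refine ⟨K₀ + (K₁ / 2 + (d / 2 + j) * K₀) * 2 ^ ((d : ℝ) / 2), by positivity,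
    fun a x u u' ha hu huu' => ?_⟩
  refine abs_sub_le_of_hasDerivAt_of_rpow_bounds (φ := fun t => gauss d c t x) (by positivity)
    hK₀ (by positivity) (by positivity) (fun s hs => (gauss_pos d hc₀ hs x).le)
    (fun s t hs hst hts => gauss_le_two_rpow_mul_gauss d hc₀ hs hst hts x)
    (fun s hs => (hasDerivAt_gauss_div_pow d j hs x).const_mul a) (fun s hs => ?_)
    (fun s hs => ?_) hu huu'
  · have hG := (gauss_pos d one_pos hs x).le
    rw [abs_mul, abs_of_nonneg (by positivity : 0 ≤ gauss d 1 s x / s ^ j)]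
    calc |a| * (gauss d 1 s x / s ^ j)
        ≤ s ^ (-((k : ℝ) / 2)) * ((‖x‖ ^ 2 / s) ^ ((m : ℝ) / 2) * gauss d 1 s x) :=
          abs_mul_div_pow_le_rpow (norm_nonneg x) hs hG ha hkmj
      _ ≤ s ^ (-((k : ℝ) / 2)) * (K₀ * gauss d c s x) :=
          mul_le_mul_of_nonneg_left (hmom₀ s hs x) (by positivity)
      _ = _ := by ring
  · calc _ ≤ _ := abs_mul_deriv_gauss_div_pow_le x hs ha hkmj
      _ ≤ s ^ (-1 - (k : ℝ) / 2) * (1 / 2 * (K₁ * gauss d c s x) +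
            (d / 2 + j) * (K₀ * gauss d c s x)) := by
          gcongr _ * (1 / 2 * ?_ + _ * ?_)
          · exact hmom₁ s hs x
          · exact hmom₀ s hs x
      _ = _ := by ring

lemma hasFDerivAt_gauss (d : ℕ) {u : ℝ} (hu : 0 < u) (x : EuclideanSpace ℝ (Fin d)) :
    HasFDerivAt (gauss d 1 u) ((-1 / u * gauss d 1 u x) • innerSL ℝ x) x := by
  have hfun : gauss d 1 u =
      fun y => (2 * π * 1 * u) ^ (-(d : ℝ) / 2) * exp (-1 / (2 * u) * ‖y‖ ^ 2) := by
    funext y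
    simp only [gauss]
    ring_nf
  have h := ((hasStrictFDerivAt_norm_sq x).hasFDerivAt.const_mul (-1 / (2 * u))).exp.const_mul
    ((2 * π * 1 * u) ^ (-(d : ℝ) / 2))
  rw [hfun]
  refine h.congr_fderiv ?_
  ext v
  simp only [smul_apply, innerSL_apply_apply, smul_eq_mul, two_smul, add_apply]
  field_simp
  ring

lemma fderiv_gauss (d : ℕ) {u : ℝ} (hu : 0 < u) :
    fderiv ℝ (gauss d 1 u) = fun x => (-1 / u * gauss d 1 u x) • innerSL ℝ x :=
  funext fun x => (hasFDerivAt_gauss d hu x).fderiv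

lemma gaussDeriv_zero (d : ℕ) (idx : Fin 0 → Fin d) (u : ℝ) (x : EuclideanSpace ℝ (Fin d)) :
    gaussDeriv d 0 idx u x = gauss d 1 u x := by
  simp [gaussDeriv]

lemma gaussDeriv_one (d : ℕ) (idx : Fin 1 → Fin d) {u : ℝ} (hu : 0 < u)
    (x : EuclideanSpace ℝ (Fin d)) :
    gaussDeriv d 1 idx u x = -x (idx 0) * (gauss d 1 u x / u ^ 1) := by
  rw [gaussDeriv, iteratedFDeriv_one_apply, (hasFDerivAt_gauss d hu x).fderiv]
  simp only [smul_apply, coe_innerSL_apply, EuclideanSpace.inner_single_right, ringHom_apply,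
    smul_eq_mul]
  ring

lemma gaussDeriv_two (d : ℕ) (idx : Fin 2 → Fin d) {u : ℝ} (hu : 0 < u)
    (x : EuclideanSpace ℝ (Fin d)) :
    gaussDeriv d 2 idx u x = x (idx 0) * x (idx 1) * (gauss d 1 u x / u ^ 2) +
      -(if idx 0 = idx 1 then 1 else 0) * (gauss d 1 u x / u ^ 1) := by
  have hcoef : HasFDerivAt (fun y => -1 / u * gauss d 1 u y)
      ((-1 / u * (-1 / u * gauss d 1 u x)) • innerSL ℝ x) x := by
    simpa only [smul_smul] using (hasFDerivAt_gauss d hu x).const_mul (-1 / u)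
  have h : HasFDerivAt (fun y => (-1 / u * gauss d 1 u y) • innerSL ℝ y) _ x :=
    hcoef.smul (innerSL ℝ).hasFDerivAt
  rw [gaussDeriv, iteratedFDeriv_two_apply, fderiv_gauss d hu, h.fderiv]
  simp only [add_apply, smul_apply, ContinuousLinearMap.smulRight_apply, coe_innerSL_apply,
    EuclideanSpace.inner_single_right, ringHom_apply, smul_eq_mul]
  rw [innerSL_apply_apply, EuclideanSpace.inner_single_left]
  simp only [ringHom_apply, PiLp.single_apply]
  split_ifs <;> ring

theorem gauss_deriv_time_holder_general (d : ℕ) (T c : ℝ) (hc : 1 < c)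
    (k : ℕ) (hk : k ≤ 2) :
    ∃ C : ℝ, 0 ≤ C ∧
      ∀ (idx : Fin k → Fin d) (u u' : ℝ) (x : EuclideanSpace ℝ (Fin d)),
        0 < u → u ≤ u' → u' ≤ T →
        |gaussDeriv d k idx u' x - gaussDeriv d k idx u x| ≤
          C * (min (u' - u) u) * u ^ (-(1 : ℝ) - (k : ℝ) / 2) *
            (gauss d c u x + gauss d c u' x) := by
  interval_cases k
  · obtain ⟨C, hC, hholder⟩ := exists_holder_gauss_div_pow d hc (k := 0) (m := 0) (j := 0) rfl
    refine ⟨C, hC, fun idx u u' x hu huu' _ => ?_⟩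
    simpa [gaussDeriv_zero] using hholder 1 x u u' (by simp) hu huu'
  · obtain ⟨C, hC, hholder⟩ := exists_holder_gauss_div_pow d hc (k := 1) (m := 1) (j := 1) rfl
    refine ⟨C, hC, fun idx u u' x hu huu' _ => ?_⟩
    rw [gaussDeriv_one d idx hu, gaussDeriv_one d idx (hu.trans_le huu')]
    exact hholder _ x u u' (by simpa using PiLp.norm_apply_le x (idx 0)) hu huu'
  · obtain ⟨C₂, hC₂, hholder₂⟩ := exists_holder_gauss_div_pow d hc (k := 2) (m := 2) (j := 2) rfl
    obtain ⟨C₁, hC₁, hholder₁⟩ := exists_holder_gauss_div_pow d hc (k := 2) (m := 0) (j := 1) rfl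
    refine ⟨C₂ + C₁, by positivity, fun idx u u' x hu huu' _ => ?_⟩
    rw [gaussDeriv_two d idx hu, gaussDeriv_two d idx (hu.trans_le huu')]
    have hxx : |x (idx 0) * x (idx 1)| ≤ ‖x‖ ^ 2 := by
      rw [abs_mul, sq]
      exact mul_le_mul (PiLp.norm_apply_le x _) (PiLp.norm_apply_le x _) (abs_nonneg _)
        (norm_nonneg x)
    have hδ : |-(if idx 0 = idx 1 then (1 : ℝ) else 0)| ≤ ‖x‖ ^ 0 := by
      split_ifs <;> simp
    rw [add_sub_add_comm]
    calc _ ≤ _ + _ := abs_add_le _ _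
      _ ≤ _ := add_le_add (hholder₂ _ x u u' hxx hu huu') (hholder₁ _ x u u' hδ hu huu')
      _ = _ := by ring

theorem gauss_deriv_time_holder (d : ℕ) (T c : ℝ) (hT : 0 < T) (hc : 1 < c)
    (k : ℕ) (hk : k ≤ 2) :
    ∃ C : ℝ, 0 ≤ C ∧
      ∀ (idx : Fin k → Fin d) (u u' : ℝ) (x : EuclideanSpace ℝ (Fin d)),
        0 < u → u ≤ u' → u' ≤ T →
        |gaussDeriv d k idx u' x - gaussDeriv d k idx u x| ≤
          C * (min (u' - u) u) * u ^ (-(1 : ℝ) - (k : ℝ) / 2) *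
            (gauss d c u x + gauss d c u' x) :=
  gauss_deriv_time_holder_general d T c hc k hk
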